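/- The 2D function v₂ defined in polar coordinates on the disk B₃ by v₂(r,θ) = u(r,θ) + 0.5(1 - cos(π(3-r))) for 1 ≤ r ≤ 3 and v₂ = u for 0 < r < 1, where u is the exact radial solution, satisfies v₂ ≥ u on B₃, v₂ = u on B₁, v₂(3,θ) = 0, ∂v₂/∂r(3,θ) = 0, and v₂ has the same coincidence set {v₂ = -1} = B₁ (closure) as u. -/

import Mathlib

/-!
The constants `c₁` and `c₂` are exactly those making `u(3) = u'(3) = 0`, and the bump
`½(1 - cos(π(3 - r)))` is nonnegative, vanishes at `r = 1` and has a double zero at `r = 3`; this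
gives everything except the coincidence set. For that one needs `u > -1` on `1 < r ≤ 3`: as
`c₂ < 0`, this is the negativity of the numerator of `u`, which follows from the lower bound
`log r ≥ 2t + 2t³/3`, `t = (r - 1)/(r + 1)`, together with `c₁ < 5.8876`.
-/

open Set Real Metric

noncomputable def c₁ : ℝ := 9 * Real.log 3 - 4
noncomputable def c₂ : ℝ := 208 - 216 * Real.log 3 + 9 * (Real.log 3)^2

/-- Radial profile of the exact solution `u` of the biharmonic obstacle problem on `B₃`. -/
noncomputable def uRad (r : ℝ) : ℝ :=
  if r < 1 then -1
  else ((r^2 - 1) * (128 + c₁ * (r^2 - 3)) + 4 * (c₁ - 32 * (1 + r^2)) * Real.log r)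
        / (4 * c₂) - 1

/-- Radial profile of the approximation `v₂`. -/
noncomputable def v₂Rad (r : ℝ) : ℝ :=
  uRad r + (if 1 ≤ r then 0.5 * (1 - Real.cos (Real.pi * (3 - r))) else 0)

/-- The exact solution `u` on the disk `B₃ ⊂ ℝ²`. -/
noncomputable def uB₃ (x : EuclideanSpace ℝ (Fin 2)) : ℝ := uRad ‖x‖

/-- The approximation `v₂` on the disk `B₃ ⊂ ℝ²`. -/
noncomputable def v₂B₃ (x : EuclideanSpace ℝ (Fin 2)) : ℝ := v₂Rad ‖x‖

-- `log r = 2 (t + t³/3 + t⁵/5 + ⋯)` with `t = (r - 1)/(r + 1) ∈ [0, 1)`.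
theorem Real.two_terms_le_log_of_one_le {r : ℝ} (hr : 1 ≤ r) :
    2 * ((r - 1) / (r + 1)) + 2 / 3 * ((r - 1) / (r + 1)) ^ 3 ≤ Real.log r := by
  set t := (r - 1) / (r + 1) with ht
  have ht0 : 0 ≤ t := div_nonneg (by linarith) (by linarith)
  have ht1 : t < 1 := (div_lt_one (by linarith)).2 (by linarith)
  have hsum := Real.hasSum_log_sub_log_of_abs_lt_one (x := t) (by rwa [abs_of_nonneg ht0])
  have hlog : Real.log (1 + t) - Real.log (1 - t) = Real.log r := by
    rw [← Real.log_div (by linarith) (by linarith)]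
    congr 1
    rw [ht]
    field_simp
    ring
  have hle := sum_le_hasSum (Finset.range 2) (fun k _ => by positivity) hsum
  rw [hlog] at hle
  norm_num [Finset.sum_range_succ] at hle
  linarith

lemma c₁_lt : c₁ < 5.8876 := by
  have := Real.log_three_lt_d9
  unfold c₁; linarith

lemma c₂_neg : c₂ < 0 := by
  have := Real.log_three_gt_d9
  have := Real.log_three_lt_d9
  unfold c₂; nlinarith

noncomputable def uNumerator (r : ℝ) : ℝ :=
  (r^2 - 1) * (128 + c₁ * (r^2 - 3)) + 4 * (c₁ - 32 * (1 + r^2)) * Real.log r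

lemma uRad_of_one_le {r : ℝ} (hr : 1 ≤ r) : uRad r = uNumerator r / (4 * c₂) - 1 := by
  rw [uRad, if_neg (not_lt.2 hr), uNumerator]

lemma uNumerator_three : uNumerator 3 = 4 * c₂ := by
  unfold uNumerator c₁ c₂; ring

lemma uNumerator_neg {r : ℝ} (h1 : 1 < r) (h3 : r ≤ 3) : uNumerator r < 0 := by
  have hlog := Real.two_terms_le_log_of_one_le h1.le
  have hcoef : 4 * (c₁ - 32 * (1 + r^2)) < 0 := by nlinarith [c₁_lt]
  have hquartic : c₁ * (3*r^4 + 18*r^3 + 42*r^2 + 42*r + 23) - 640*r^2 - 768*r - 640 < 0 := by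
    have hp : 0 < 3*r^4 + 18*r^3 + 42*r^2 + 42*r + 23 := by positivity
    have h13 := mul_nonneg (sub_pos.2 h1).le (sub_nonneg.2 h3)
    nlinarith [mul_lt_mul_of_pos_right c₁_lt hp, mul_nonneg h13 (sq_nonneg r), mul_nonneg h13 h13]
  have hpos : 0 < 3 * (r + 1)^3 := by positivity
  -- Replacing `log r` by its lower bound leaves `(r - 1)³` times a quartic negative on `[1, 3]`.
  have hmul : 3 * (r + 1)^3 * uNumerator r < 0 := calc
    3 * (r + 1)^3 * uNumerator r
      ≤ 3 * (r + 1)^3 * ((r^2 - 1) * (128 + c₁ * (r^2 - 3)) + 4 * (c₁ - 32 * (1 + r^2)) *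
          (2 * ((r - 1) / (r + 1)) + 2 / 3 * ((r - 1) / (r + 1)) ^ 3)) := by
        gcongr
        unfold uNumerator
        nlinarith
    _ = (r - 1)^3 * (c₁ * (3*r^4 + 18*r^3 + 42*r^2 + 42*r + 23) - 640*r^2 - 768*r - 640) := by
        field_simp
        ring
    _ < 0 := mul_neg_of_pos_of_neg (pow_pos (sub_pos.2 h1) 3) hquartic
  exact neg_of_mul_neg_right hmul hpos.le

lemma neg_one_lt_uRad {r : ℝ} (h1 : 1 < r) (h3 : r ≤ 3) : -1 < uRad r := by
  rw [uRad_of_one_le h1.le]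
  have : 0 < uNumerator r / (4 * c₂) :=
    div_pos_of_neg_of_neg (uNumerator_neg h1 h3) (by linarith [c₂_neg])
  linarith

lemma uRad_three : uRad 3 = 0 := by
  rw [uRad_of_one_le (by norm_num), uNumerator_three, div_self (by linarith [c₂_neg]), sub_self]

lemma uRad_le_v₂Rad (r : ℝ) : uRad r ≤ v₂Rad r := by
  rw [v₂Rad, le_add_iff_nonneg_right]
  split_ifs
  · linarith [Real.cos_le_one (π * (3 - r))]
  · exact le_rfl

lemma v₂Rad_of_lt_one {r : ℝ} (h : r < 1) : v₂Rad r = uRad r := by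
  rw [v₂Rad, if_neg (not_le.2 h), add_zero]

lemma v₂Rad_of_le_one {r : ℝ} (h : r ≤ 1) : v₂Rad r = -1 := by
  rcases h.lt_or_eq with h | rfl
  · rw [v₂Rad_of_lt_one h, uRad, if_pos h]
  · rw [v₂Rad, uRad_of_one_le le_rfl, if_pos le_rfl, show π * (3 - 1) = 2 * π by ring,
      Real.cos_two_pi, uNumerator, Real.log_one]
    norm_num

lemma v₂Rad_three : v₂Rad 3 = 0 := by
  rw [v₂Rad, uRad_three, if_pos (by norm_num)]
  norm_num

lemma hasDerivAt_uNumerator {r : ℝ} (hr : r ≠ 0) :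
    HasDerivAt uNumerator (2 * r * (128 + c₁ * (r^2 - 3)) + (r^2 - 1) * (2 * c₁ * r)
      - 256 * r * Real.log r + 4 * (c₁ - 32 * (1 + r^2)) / r) r := by
  have hsq : HasDerivAt (fun r : ℝ => r^2) (2 * r) r := by simpa using hasDerivAt_pow 2 r
  have h := ((hsq.sub_const 1).mul (((hsq.sub_const 3).const_mul c₁).const_add 128)).add
    ((((hsq.const_add 1).const_mul 32).const_sub c₁).const_mul 4 |>.mul (Real.hasDerivAt_log hr))
  refine h.congr_deriv ?_
  field_simp
  ring

lemma hasDerivAt_v₂Rad_three : HasDerivAt v₂Rad 0 3 := by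
  have hu : HasDerivAt (fun r => uNumerator r / (4 * c₂) - 1) 0 3 := by
    refine (((hasDerivAt_uNumerator three_ne_zero).div_const (4 * c₂)).sub_const 1).congr_deriv ?_
    unfold c₁
    ring
  have hbump : HasDerivAt (fun r => 0.5 * (1 - Real.cos (π * (3 - r)))) 0 3 := by
    simpa using
      ((((hasDerivAt_id (3 : ℝ)).const_sub 3).const_mul π).cos.const_sub 1).const_mul 0.5
  have hv₂ : v₂Rad =ᶠ[nhds 3]
      fun r => (uNumerator r / (4 * c₂) - 1) + 0.5 * (1 - Real.cos (π * (3 - r))) := by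
    filter_upwards [Ioi_mem_nhds (show (1 : ℝ) < 3 by norm_num)] with r hr
    rw [v₂Rad, uRad_of_one_le (le_of_lt hr), if_pos (le_of_lt hr)]
  simpa using (hu.add hbump).congr_of_eventuallyEq hv₂

/-- `v₂ ≥ u` on `B₃`, `v₂ = u` on `B₁`, `v₂` vanishes together with its normal
(radial) derivative on the boundary `r = 3`, and `v₂` has the same coincidence set
`{v₂ = -1} = closure of B₁` as `u`. -/
theorem v₂_properties :
    (∀ x : EuclideanSpace ℝ (Fin 2), x ∈ closedBall (0 : EuclideanSpace ℝ (Fin 2)) 3 →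
      uB₃ x ≤ v₂B₃ x) ∧
    (∀ x : EuclideanSpace ℝ (Fin 2), x ∈ ball (0 : EuclideanSpace ℝ (Fin 2)) 1 →
      v₂B₃ x = uB₃ x) ∧
    (∀ x : EuclideanSpace ℝ (Fin 2), ‖x‖ = 3 → v₂B₃ x = 0) ∧
    deriv v₂Rad 3 = 0 ∧
    {x ∈ closedBall (0 : EuclideanSpace ℝ (Fin 2)) 3 | v₂B₃ x = -1}
      = closedBall (0 : EuclideanSpace ℝ (Fin 2)) 1 := by
  refine ⟨fun x _ => uRad_le_v₂Rad ‖x‖, fun x hx => v₂Rad_of_lt_one (mem_ball_zero_iff.1 hx),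
    fun x hx => by rw [v₂B₃, hx, v₂Rad_three], hasDerivAt_v₂Rad_three.deriv, ?_⟩
  ext x
  simp only [mem_closedBall_zero_iff, v₂B₃]
  constructor
  · rintro ⟨h3, hv⟩
    by_contra! h1
    linarith [neg_one_lt_uRad h1 h3, uRad_le_v₂Rad ‖x‖]
  · intro h1
    exact ⟨by linarith, v₂Rad_of_le_one h1⟩
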